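/- arXiv:1706.07261 — 2 statements merged into one kernel-verified Lean document; each statement's English description precedes it below -/
import Mathlib

section
/- Let n ≥ 1, and for a point x define u₀ = 1 − Σᵢ₌₁ⁿ uᵢ where u₁,…,uₙ : ℝᵈ → (0,1) are smooth with u₀ > 0. Then pointwise Σᵢ₌₁ⁿ uᵢ u₀ |∇ log(uᵢ/u₀)|² = 4 u₀ Σᵢ₌₁ⁿ |∇√uᵢ|² + |∇u₀|² + 4|∇√u₀|². -/
open InnerProductSpace

local notation "⟪" x ", " y "⟫" => @inner ℝ _ _ x y

variable {F : Type*} [NormedAddCommGroup F] [InnerProductSpace ℝ F] [CompleteSpace F]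

lemma hga_comp {f : F → ℝ} {x a : F} {g : ℝ → ℝ} {c : ℝ}
    (hf : HasGradientAt f a x) (hg : HasDerivAt g c (f x)) :
    HasGradientAt (fun y => g (f y)) (c • a) x := by
  rw [hasGradientAt_iff_hasFDerivAt] at hf ⊢
  have := (hg.hasFDerivAt.comp x hf)
  refine this.congr_fderiv ?_
  ext v
  simp [InnerProductSpace.toDual_apply_apply, real_inner_smul_left, smul_eq_mul]
  ring

lemma hga_sub {f g : F → ℝ} {x a b : F}
    (hf : HasGradientAt f a x) (hg : HasGradientAt g b x) :
    HasGradientAt (fun y => f y - g y) (a - b) x := by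
  rw [hasGradientAt_iff_hasFDerivAt] at hf hg ⊢
  rw [map_sub]
  exact hf.sub hg

lemma hga_const_sub_sum {n : ℕ} {u : Fin n → F → ℝ} {a : Fin n → F} {x : F}
    (hf : ∀ i, HasGradientAt (u i) (a i) x) :
    HasGradientAt (fun y => 1 - ∑ i, u i y) (-∑ i, a i) x := by
  rw [hasGradientAt_iff_hasFDerivAt]
  have hsum : HasFDerivAt (fun y => ∑ i, u i y)
      (∑ i, InnerProductSpace.toDual ℝ F (a i)) x :=
    HasFDerivAt.fun_sum (fun i _ => (hf i).hasFDerivAt)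
  have h := hsum.const_sub 1
  rw [map_neg, map_sum]
  exact h

theorem stmt1 (d n : ℕ) (hn : 1 ≤ n)
    (u : Fin n → EuclideanSpace ℝ (Fin d) → ℝ)
    (hsmooth : ∀ i, ContDiff ℝ (⊤ : ℕ∞) (u i))
    (hrange : ∀ i x, u i x ∈ Set.Ioo (0 : ℝ) 1)
    (u₀ : EuclideanSpace ℝ (Fin d) → ℝ)
    (hu₀ : u₀ = fun x => 1 - ∑ i, u i x)
    (x : EuclideanSpace ℝ (Fin d)) (hpos : 0 < u₀ x) :
    ∑ i, u i x * u₀ x * ‖gradient (fun y => Real.log (u i y / u₀ y)) x‖ ^ 2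
      = 4 * u₀ x * ∑ i, ‖gradient (fun y => Real.sqrt (u i y)) x‖ ^ 2
        + ‖gradient u₀ x‖ ^ 2
        + 4 * ‖gradient (fun y => Real.sqrt (u₀ y)) x‖ ^ 2 := by
  -- gradients
  set a : Fin n → EuclideanSpace ℝ (Fin d) := fun i => gradient (u i) x with ha
  have hdi : ∀ i, DifferentiableAt ℝ (u i) x := fun i =>
    ((hsmooth i).differentiable (by simp)).differentiableAt
  have hai : ∀ i, HasGradientAt (u i) (a i) x := fun i => (hdi i).hasGradientAt
  have hb : HasGradientAt u₀ (-∑ i, a i) x := by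
    rw [hu₀]; exact hga_const_sub_sum hai
  set b : EuclideanSpace ℝ (Fin d) := -∑ i, a i with hbdef
  have hbg : gradient u₀ x = b := hb.gradient
  have hupos : ∀ i, 0 < u i x := fun i => (hrange i x).1
  -- positivity of u₀ near x
  have hcont : ContinuousAt u₀ x := hb.differentiableAt.continuousAt
  have hev : ∀ᶠ y in nhds x, 0 < u₀ y := hcont.eventually (eventually_gt_nhds hpos)
  -- gradient of log quotient
  have hlog : ∀ i, gradient (fun y => Real.log (u i y / u₀ y)) x
      = (u i x)⁻¹ • a i - (u₀ x)⁻¹ • b := by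
    intro i
    have h1 : HasGradientAt (fun y => Real.log (u i y)) ((u i x)⁻¹ • a i) x :=
      hga_comp (hai i) (Real.hasDerivAt_log (hupos i).ne')
    have h2 : HasGradientAt (fun y => Real.log (u₀ y)) ((u₀ x)⁻¹ • b) x :=
      hga_comp hb (Real.hasDerivAt_log hpos.ne')
    have h3 := hga_sub h1 h2
    have h4 : HasGradientAt (fun y => Real.log (u i y / u₀ y))
        ((u i x)⁻¹ • a i - (u₀ x)⁻¹ • b) x := by
      apply h3.congr_of_eventuallyEq
      filter_upwards [hev] with y hy
      rw [Real.log_div (hrange i y).1.ne' hy.ne']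
    exact h4.gradient
  have hsi : ∀ i, gradient (fun y => Real.sqrt (u i y)) x
      = (1 / (2 * Real.sqrt (u i x))) • a i := fun i =>
    (hga_comp (hai i) (Real.hasDerivAt_sqrt (hupos i).ne')).gradient
  have hs0 : gradient (fun y => Real.sqrt (u₀ y)) x
      = (1 / (2 * Real.sqrt (u₀ x))) • b :=
    (hga_comp hb (Real.hasDerivAt_sqrt hpos.ne')).gradient
  rw [hbg]
  -- abbreviations
  set s := u₀ x with hs
  have hsum : ∑ i, u i x = 1 - s := by rw [hs, hu₀]; ring
  have hsab : ∑ i, a i = -b := by simp [hbdef]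
  -- expand each LHS term
  have hL : ∀ i, u i x * s * ‖gradient (fun y => Real.log (u i y / u₀ y)) x‖ ^ 2
      = (s / u i x) * ‖a i‖ ^ 2 - 2 * ⟪a i, b⟫ + (u i x / s) * ‖b‖ ^ 2 := by
    intro i
    rw [hlog i, @norm_sub_sq_real]
    rw [norm_smul, norm_smul, real_inner_smul_left, real_inner_smul_right]
    simp only [Real.norm_eq_abs, abs_inv, abs_of_pos (hupos i), abs_of_pos hpos]
    have h1 : u i x ≠ 0 := (hupos i).ne'
    have h2 : s ≠ 0 := hpos.ne'
    field_simp
  have hR : ∀ i, ‖gradient (fun y => Real.sqrt (u i y)) x‖ ^ 2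
      = ‖a i‖ ^ 2 / (4 * u i x) := by
    intro i
    rw [hsi i, norm_smul]
    have : Real.sqrt (u i x) > 0 := Real.sqrt_pos.mpr (hupos i)
    rw [Real.norm_eq_abs, abs_of_pos (by positivity)]
    rw [mul_pow, div_pow, one_pow, mul_pow, Real.sq_sqrt (hupos i).le]
    ring
  have hR0 : ‖gradient (fun y => Real.sqrt (u₀ y)) x‖ ^ 2 = ‖b‖ ^ 2 / (4 * s) := by
    rw [hs0, norm_smul]
    have : Real.sqrt s > 0 := Real.sqrt_pos.mpr hpos
    rw [Real.norm_eq_abs, abs_of_pos (by positivity)]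
    rw [mul_pow, div_pow, one_pow, mul_pow, Real.sq_sqrt hpos.le]
    ring
  simp only [hL, hR, hR0]
  rw [Finset.sum_add_distrib, Finset.sum_sub_distrib]
  have h1 : ∑ i, 2 * ⟪a i, b⟫ = -(2 * ‖b‖ ^ 2) := by
    rw [← Finset.mul_sum, ← sum_inner, hsab, inner_neg_left, real_inner_self_eq_norm_sq]
    ring
  have h2 : ∑ i : Fin n, u i x / s * ‖b‖ ^ 2 = (1 - s) / s * ‖b‖ ^ 2 := by
    rw [← Finset.sum_mul, ← Finset.sum_div, hsum]
  have h3 : ∑ i : Fin n, s / u i x * ‖a i‖ ^ 2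
      = 4 * s * ∑ i, ‖a i‖ ^ 2 / (4 * u i x) := by
    rw [Finset.mul_sum]
    apply Finset.sum_congr rfl
    intro i _
    have h1 : u i x ≠ 0 := (hupos i).ne'
    field_simp
  rw [h1, h2, h3]
  have h2 : s ≠ 0 := hpos.ne'
  field_simp
  ring
end

section
/- Let h(s) = s(log s − 1) + 1 for s > 0 (extended by h(0) = 1). Then for all u, v ≥ 0, h(u) + h(v) − 2 h((u+v)/2) ≥ (1/8)(u − v)² / max(1, (u+v)/2). In particular, if 0 ≤ u, v ≤ 1 then h(u) + h(v) − 2h((u+v)/2) ≥ (1/8)(u − v)². -/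
/-- For `0 < t ≤ 1`, `(t² - 1)/(2t) ≤ log t`.  Via `r ≤ sinh r`. -/
lemma log_ge_aux {t : ℝ} (ht : 0 < t) (ht1 : t ≤ 1) :
    (t ^ 2 - 1) / (2 * t) ≤ Real.log t := by
  set r : ℝ := -Real.log t with hr
  have hr0 : 0 ≤ r := by
    have := Real.log_nonpos ht.le ht1
    simp [hr]; linarith
  have hsinh : r ≤ Real.sinh r := by
    rcases eq_or_lt_of_le hr0 with h0 | h0
    · simp [← h0]
    · exact (Real.self_lt_sinh_iff.2 h0).le
  have hexp : Real.exp (-r) = t := by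
    rw [hr, neg_neg, Real.exp_log ht]
  have hsinh_eq : Real.sinh r = (t⁻¹ - t) / 2 := by
    rw [Real.sinh_eq]
    have : Real.exp r = t⁻¹ := by
      rw [← hexp, ← Real.exp_neg, neg_neg]
    rw [this, hexp]
  have : -Real.log t ≤ (t⁻¹ - t) / 2 := hsinh_eq ▸ hsinh
  have h2 : (t ^ 2 - 1) / (2 * t) = -((t⁻¹ - t) / 2) := by
    field_simp; ring
  rw [h2]; linarith

/-- For `0 ≤ a ≤ b`, `a log a - a log b - a + b ≥ (b - a)²/(2b)`. -/
lemma term_lower {a b : ℝ} (ha : 0 ≤ a) (hab : a ≤ b) (hb : 0 < b) :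
    (b - a) ^ 2 / (2 * b) ≤ a * Real.log a - a * Real.log b - a + b := by
  rcases eq_or_lt_of_le ha with h0 | h0
  · subst h0
    simp only [zero_mul, sub_zero, zero_sub, neg_add_eq_sub, sub_zero]
    rw [div_le_iff₀ (by linarith)]
    nlinarith
  · set t : ℝ := a / b with htdef
    have ht : 0 < t := div_pos h0 hb
    have ht1 : t ≤ 1 := (div_le_one hb).2 hab
    have hlog : (t ^ 2 - 1) / (2 * t) ≤ Real.log t := log_ge_aux ht ht1
    have hlogt : Real.log t = Real.log a - Real.log b := Real.log_div h0.ne' hb.ne'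
    have key : (1 - t) ^ 2 / 2 ≤ t * Real.log t - t + 1 := by
      have : (t ^ 2 - 1) / 2 ≤ t * Real.log t := by
        have := mul_le_mul_of_nonneg_left hlog ht.le
        calc (t ^ 2 - 1) / 2 = t * ((t ^ 2 - 1) / (2 * t)) := by field_simp
        _ ≤ t * Real.log t := this
      nlinarith
    have hab' : a = t * b := by rw [htdef]; exact (div_mul_cancel₀ a hb.ne').symm
    have hkey' := mul_le_mul_of_nonneg_left key hb.le
    have hL : b * ((1 - t) ^ 2 / 2) = (b - a) ^ 2 / (2 * b) := by
      rw [hab']; field_simp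
    have hR : b * (t * Real.log t - t + 1) = a * Real.log a - a * Real.log b - a + b := by
      rw [hlogt, hab']; ring
    linarith [hL ▸ hR ▸ hkey']

/-- For `0 ≤ a`, `0 < b`: `a log a - a log b - a + b ≥ 0`. -/
lemma term_nonneg {a b : ℝ} (ha : 0 ≤ a) (hb : 0 < b) :
    0 ≤ a * Real.log a - a * Real.log b - a + b := by
  rcases eq_or_lt_of_le ha with h0 | h0
  · subst a; simp; linarith
  · have h1 : Real.log b - Real.log a ≤ b / a - 1 := by
      have := Real.log_le_sub_one_of_pos (div_pos hb h0)
      rwa [Real.log_div hb.ne' h0.ne'] at this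
    have := mul_le_mul_of_nonneg_left h1 h0.le
    have h2 : a * (b / a - 1) = b - a := by field_simp
    nlinarith

/-- Core: for `0 ≤ u ≤ v` with `m = (u+v)/2 > 0`. -/
lemma core {u v : ℝ} (hu : 0 ≤ u) (huv : u ≤ v) (hm : 0 < (u + v) / 2) :
    (u - v) ^ 2 / (8 * ((u + v) / 2)) ≤
      u * Real.log u + v * Real.log v - 2 * ((u + v) / 2) * Real.log ((u + v) / 2)
        - u - v + 2 * ((u + v) / 2) := by
  set m : ℝ := (u + v) / 2 with hmdef
  have hum : u ≤ m := by rw [hmdef]; linarith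
  have hvm : m ≤ v := by rw [hmdef]; linarith
  have hv : 0 ≤ v := le_trans hu huv
  have T1 : (m - u) ^ 2 / (2 * m) ≤ u * Real.log u - u * Real.log m - u + m :=
    term_lower hu hum hm
  have T2 : 0 ≤ v * Real.log v - v * Real.log m - v + m := term_nonneg hv hm
  have hne : (0:ℝ) < u + v := by rw [hmdef] at hm; linarith
  have heq : (u - v) ^ 2 / (8 * m) = (m - u) ^ 2 / (2 * m) := by
    rw [hmdef]; field_simp [hne.ne']; ring
  have hsum : 2 * m * Real.log m = u * Real.log m + v * Real.log m := by
    rw [hmdef]; ring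
  rw [heq]; linarith

theorem stmt12 (h : ℝ → ℝ) (hh : h = fun s => s * (Real.log s - 1) + 1) :
    h 0 = 1 ∧
    (∀ u v : ℝ, 0 ≤ u → 0 ≤ v →
      (1/8) * (u - v) ^ 2 / max 1 ((u + v) / 2)
        ≤ h u + h v - 2 * h ((u + v) / 2)) ∧
    (∀ u v : ℝ, u ∈ Set.Icc (0 : ℝ) 1 → v ∈ Set.Icc (0 : ℝ) 1 →
      (1/8) * (u - v) ^ 2 ≤ h u + h v - 2 * h ((u + v) / 2)) := by
  subst hh
  have main : ∀ u v : ℝ, 0 ≤ u → 0 ≤ v →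
      (1/8) * (u - v) ^ 2 / max 1 ((u + v) / 2)
        ≤ (fun s => s * (Real.log s - 1) + 1) u + (fun s => s * (Real.log s - 1) + 1) v
          - 2 * ((fun s => s * (Real.log s - 1) + 1) ((u + v) / 2)) := by
    intro u v hu hv
    simp only []
    rcases eq_or_lt_of_le (by linarith : (0:ℝ) ≤ (u + v) / 2) with hm0 | hm
    · have hu0 : u = 0 := by linarith [le_antisymm (by linarith : u + v ≤ 0) (by linarith : 0 ≤ u + v)] 
      have hv0 : v = 0 := by nlinarith [hm0]
      subst hu0; subst hv0
      norm_num
    · -- core inequality, wlog u ≤ v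
      have hcore : (u - v) ^ 2 / (8 * ((u + v) / 2)) ≤
          u * Real.log u + v * Real.log v - 2 * ((u + v) / 2) * Real.log ((u + v) / 2)
            - u - v + 2 * ((u + v) / 2) := by
        rcases le_total u v with huv | hvu
        · exact core hu huv hm
        · have := core hv hvu (by rw [add_comm]; exact hm)
          have e1 : (v - u) ^ 2 = (u - v) ^ 2 := by ring
          have e2 : (v + u) / 2 = (u + v) / 2 := by ring
          rw [e1, e2] at this
          linarith
      have hmax : (1/8) * (u - v) ^ 2 / max 1 ((u + v) / 2)
          ≤ (u - v) ^ 2 / (8 * ((u + v) / 2)) := by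
        rw [div_le_div_iff₀ (by positivity) (by positivity)]
        have h1 : (u + v) / 2 ≤ max 1 ((u + v) / 2) := le_max_right _ _
        nlinarith [sq_nonneg (u - v)]
      calc (1/8) * (u - v) ^ 2 / max 1 ((u + v) / 2)
          ≤ (u - v) ^ 2 / (8 * ((u + v) / 2)) := hmax
        _ ≤ u * Real.log u + v * Real.log v - 2 * ((u + v) / 2) * Real.log ((u + v) / 2)
            - u - v + 2 * ((u + v) / 2) := hcore
        _ = u * (Real.log u - 1) + 1 + (v * (Real.log v - 1) + 1)
            - 2 * ((u + v) / 2 * (Real.log ((u + v) / 2) - 1) + 1) := by ring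
  refine ⟨by norm_num, main, ?_⟩
  intro u v hu hv
  obtain ⟨hu0, hu1⟩ := hu
  obtain ⟨hv0, hv1⟩ := hv
  have hmax : max 1 ((u + v) / 2) = 1 := max_eq_left (by linarith)
  have := main u v hu0 hv0
  rw [hmax] at this
  simpa using this
end
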